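/- The FRSD iterates satisfy, for every k ≥ 1, ‖x̂(k) − x̂(k−1)‖ ≤ α v ṽ L ‖x(k) − x(k−1)‖_R + 3 α v ṽ² √n κ₃ σ_R^{k−1} ‖∇f(x(k))‖ + α nL ‖x(k) − x̂(k)‖_C + α nL ‖x̂(k) − x*_vec‖. -/

import Mathlib

open Matrix Filter
open scoped Kronecker

noncomputable section

/-- Euclidean norm on `ι → ℝ`. -/
def eucNorm {ι : Type*} [Fintype ι] (z : ι → ℝ) : ℝ := Real.sqrt (∑ i, z i ^ 2)

/-- Spectral norm (operator 2-norm) of a square real matrix. -/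
def specNorm {ι : Type*} [Fintype ι] (A : Matrix ι ι ℝ) : ℝ :=
  sSup {c : ℝ | ∃ z : ι → ℝ, eucNorm z ≤ 1 ∧ c = eucNorm (A.mulVec z)}

/-- Matrix norm induced by a vector norm `N`: `sup_{z ≠ 0} N (A z) / N z`. -/
def opNorm {ι : Type*} [Fintype ι] (N : (ι → ℝ) → ℝ) (A : Matrix ι ι ℝ) : ℝ :=
  sSup {c : ℝ | ∃ z : ι → ℝ, z ≠ 0 ∧ c = N (A.mulVec z) / N z}

/-- `g` is the gradient of `f : ℝ^p → ℝ`. -/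
def IsGradient {p : ℕ} (f : (Fin p → ℝ) → ℝ) (g : (Fin p → ℝ) → Fin p → ℝ) : Prop :=
  ∀ x, HasFDerivAt f (∑ j, g x j • (ContinuousLinearMap.proj j : (Fin p → ℝ) →L[ℝ] ℝ)) x

/-- `R = R̄ ⊗ I_p`. -/
def RK (n p : ℕ) (Rb : Matrix (Fin n) (Fin n) ℝ) :
    Matrix (Fin n × Fin p) (Fin n × Fin p) ℝ :=
  Rb ⊗ₖ (1 : Matrix (Fin p) (Fin p) ℝ)

/-- `V_∞ = (1_n π^T) ⊗ I_p`. -/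
def VinfK (n p : ℕ) (π : Fin n → ℝ) :
    Matrix (Fin n × Fin p) (Fin n × Fin p) ℝ :=
  (Matrix.of (fun _ j => π j) : Matrix (Fin n) (Fin n) ℝ) ⊗ₖ (1 : Matrix (Fin p) (Fin p) ℝ)

/-- `V(k) = R̄^k ⊗ I_p`. -/
def VK (n p : ℕ) (Rb : Matrix (Fin n) (Fin n) ℝ) (k : ℕ) :
    Matrix (Fin n × Fin p) (Fin n × Fin p) ℝ :=
  (Rb ^ k) ⊗ₖ (1 : Matrix (Fin p) (Fin p) ℝ)

/-- `Ṽ(k)⁻¹ = diag(((R̄^k)_{11})⁻¹, …, ((R̄^k)_{nn})⁻¹) ⊗ I_p`. -/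
def VtinvK (n p : ℕ) (Rb : Matrix (Fin n) (Fin n) ℝ) (k : ℕ) :
    Matrix (Fin n × Fin p) (Fin n × Fin p) ℝ :=
  Matrix.diagonal (fun q => ((Rb ^ k) q.1 q.1)⁻¹)

/-- `∇f(z) = (∇f_1(z_1), …, ∇f_n(z_n))` block-wise. -/
def gradf {n p : ℕ} (g : Fin n → (Fin p → ℝ) → Fin p → ℝ) (z : Fin n × Fin p → ℝ) :
    Fin n × Fin p → ℝ :=
  fun q => g q.1 (fun j => z (q.1, j)) q.2

/-- `x*_vec = 1_n ⊗ x*`. -/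
def starVec (n p : ℕ) (xstar : Fin p → ℝ) : Fin n × Fin p → ℝ := fun q => xstar q.2

end

/-!
Since `V∞ R = V∞` and `V∞ (I - R) = 0`, the averaged iterate moves by
`x̂(k+1) - x̂(k) = -α V∞ Ṽ(k)⁻¹ ∇f(x(k))`. Writing `Ṽ(k)⁻¹ = diag(π)⁻¹ + (Ṽ(k)⁻¹ - diag(π)⁻¹)` and
`∇f(x(k)) = ∇f(x(k+1)) + (∇f(x(k)) - ∇f(x(k+1)))` splits this step into a Lipschitz term, a term
controlled by `|(R̄^k)ᵢᵢ - πᵢ| ≤ ‖V(k) - V∞‖ ≤ κ₃ σ_R^k` (as `(R - V∞)^k = V(k) - V∞`), and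
`V∞ diag(π)⁻¹ ∇f(x(k+1)) = (1 1ᵀ ⊗ I) ∇f(x(k+1))`; as `∑ᵢ ∇fᵢ(x*) = 0`, the blocks of the latter are
bounded by Lipschitz continuity between `x(k+1)`, its average and `x*`. The constants `v` and `ṽ`
also bound `‖V∞‖` and `‖diag(π)⁻¹‖`, which are the limits of `V(k)` and `Ṽ(k)⁻¹`.
-/

open Finset Filter Topology
open scoped Matrix.Norms.L2Operator

namespace Frsd

section EucNorm

variable {ι : Type*} [Fintype ι]

lemma eucNorm_eq_norm (z : ι → ℝ) : eucNorm z = ‖WithLp.toLp 2 z‖ := by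
  simp [eucNorm, EuclideanSpace.norm_eq, sq_abs]

lemma eucNorm_nonneg (z : ι → ℝ) : 0 ≤ eucNorm z := Real.sqrt_nonneg _

lemma sq_eucNorm (z : ι → ℝ) : eucNorm z ^ 2 = ∑ i, z i ^ 2 :=
  Real.sq_sqrt (sum_nonneg fun _ _ => sq_nonneg _)

lemma eucNorm_zero : eucNorm (0 : ι → ℝ) = 0 := by simp [eucNorm]

lemma eucNorm_eq_zero {z : ι → ℝ} : eucNorm z = 0 ↔ z = 0 := by
  simp [eucNorm_eq_norm]

lemma eucNorm_pos {z : ι → ℝ} (hz : z ≠ 0) : 0 < eucNorm z :=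
  (eucNorm_nonneg z).lt_of_ne' (mt eucNorm_eq_zero.1 hz)

lemma eucNorm_smul (a : ℝ) (z : ι → ℝ) : eucNorm (a • z) = |a| * eucNorm z := by
  simp [eucNorm_eq_norm, norm_smul]

lemma eucNorm_neg (z : ι → ℝ) : eucNorm (-z) = eucNorm z := by
  simp [eucNorm_eq_norm]

lemma eucNorm_sub_comm (z w : ι → ℝ) : eucNorm (z - w) = eucNorm (w - z) := by
  rw [← eucNorm_neg, neg_sub]

lemma eucNorm_add_le (z w : ι → ℝ) : eucNorm (z + w) ≤ eucNorm z + eucNorm w := by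
  simpa [eucNorm_eq_norm] using norm_add_le (WithLp.toLp 2 z) (WithLp.toLp 2 w)

lemma eucNorm_sum_le {κ : Type*} (s : Finset κ) (z : κ → ι → ℝ) :
    eucNorm (∑ k ∈ s, z k) ≤ ∑ k ∈ s, eucNorm (z k) := by
  simpa [eucNorm_eq_norm, WithLp.toLp_sum] using norm_sum_le s fun k => WithLp.toLp 2 (z k)

lemma abs_apply_le_eucNorm (z : ι → ℝ) (i : ι) : |z i| ≤ eucNorm z := by
  simpa [eucNorm_eq_norm] using PiLp.norm_apply_le (WithLp.toLp 2 z) i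

lemma eucNorm_single [DecidableEq ι] (i : ι) : eucNorm (Pi.single i 1 : ι → ℝ) = 1 := by
  simp [eucNorm_eq_norm]

end EucNorm

section MatrixNorms

variable {ι : Type*} [Fintype ι]

lemma eucNorm_mulVec_le [DecidableEq ι] (A : Matrix ι ι ℝ) (z : ι → ℝ) :
    eucNorm (A *ᵥ z) ≤ ‖A‖ * eucNorm z := by
  rw [← Matrix.l2_opNorm_toEuclideanCLM]
  simpa [eucNorm_eq_norm] using
    (Matrix.toEuclideanCLM (n := ι) (𝕜 := ℝ) A).le_opNorm (WithLp.toLp 2 z)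

lemma l2_opNorm_le_of_eucNorm_mulVec_le [DecidableEq ι] {A : Matrix ι ι ℝ} {C : ℝ} (hC : 0 ≤ C)
    (h : ∀ z, eucNorm (A *ᵥ z) ≤ C * eucNorm z) : ‖A‖ ≤ C :=
  (Matrix.toEuclideanCLM (n := ι) (𝕜 := ℝ) A).opNorm_le_bound hC fun z => by
    have hz := h z.ofLp
    rwa [eucNorm_eq_norm, eucNorm_eq_norm, WithLp.toLp_ofLp] at hz

lemma specNorm_eq_l2_opNorm [DecidableEq ι] (A : Matrix ι ι ℝ) : specNorm A = ‖A‖ := by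
  rw [← Matrix.l2_opNorm_toEuclideanCLM, ← ContinuousLinearMap.sSup_unitClosedBall_eq_norm,
    specNorm]
  congr 1
  ext c
  constructor
  · rintro ⟨z, hz, rfl⟩
    exact ⟨WithLp.toLp 2 z, by simpa [eucNorm_eq_norm] using hz, by simp [eucNorm_eq_norm]⟩
  · rintro ⟨z, hz, rfl⟩
    exact ⟨z.ofLp, by simpa [eucNorm_eq_norm] using hz, by simp only [eucNorm_eq_norm]; rfl⟩

lemma specNorm_nonneg [DecidableEq ι] (A : Matrix ι ι ℝ) : 0 ≤ specNorm A :=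
  (specNorm_eq_l2_opNorm A).symm ▸ norm_nonneg A

lemma opNorm_nonneg (N : (ι → ℝ) → ℝ) (hge : ∀ z, eucNorm z ≤ N z) (A : Matrix ι ι ℝ) :
    0 ≤ opNorm N A :=
  Real.sSup_nonneg fun _ ⟨_, _, hc⟩ =>
    hc ▸ div_nonneg ((eucNorm_nonneg _).trans (hge _)) ((eucNorm_nonneg _).trans (hge _))

variable {N : (ι → ℝ) → ℝ} {κ : ℝ}

lemma le_opNorm_mul [DecidableEq ι] (hge : ∀ z, eucNorm z ≤ N z) (hle : ∀ z, N z ≤ κ * eucNorm z)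
    (A : Matrix ι ι ℝ) (z : ι → ℝ) : N (A *ᵥ z) ≤ opNorm N A * N z := by
  rcases eq_or_ne z 0 with rfl | hz
  · have h0 : N 0 = 0 := le_antisymm (by simpa [eucNorm_zero] using hle 0)
      (by simpa [eucNorm_zero] using hge 0)
    simp [h0]
  have hNz : 0 < N z := (eucNorm_pos hz).trans_le (hge z)
  have hκ : 0 ≤ κ := nonneg_of_mul_nonneg_left ((eucNorm_nonneg z).trans ((hge z).trans (hle z)))
    (eucNorm_pos hz)
  have hbdd : BddAbove {c : ℝ | ∃ w : ι → ℝ, w ≠ 0 ∧ c = N (A *ᵥ w) / N w} := by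
    refine ⟨κ * ‖A‖, ?_⟩
    rintro _ ⟨w, hw, rfl⟩
    rw [div_le_iff₀ ((eucNorm_pos hw).trans_le (hge w))]
    calc N (A *ᵥ w) ≤ κ * eucNorm (A *ᵥ w) := hle _
      _ ≤ κ * (‖A‖ * N w) := by
        gcongr
        exact (eucNorm_mulVec_le A w).trans (by gcongr; exact hge w)
      _ = κ * ‖A‖ * N w := by ring
  rw [← div_le_iff₀ hNz]
  exact le_csSup hbdd ⟨z, hz, rfl⟩

lemma le_opNorm_pow_mul [DecidableEq ι] (hge : ∀ z, eucNorm z ≤ N z)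
    (hle : ∀ z, N z ≤ κ * eucNorm z)
    (A : Matrix ι ι ℝ) (m : ℕ) (z : ι → ℝ) : N ((A ^ m) *ᵥ z) ≤ opNorm N A ^ m * N z := by
  induction m generalizing z with
  | zero => simp
  | succ m ih =>
    rw [pow_succ, ← Matrix.mulVec_mulVec, pow_succ, mul_assoc]
    exact (ih _).trans <| by
      gcongr
      · exact pow_nonneg (opNorm_nonneg N hge A) m
      · exact le_opNorm_mul hge hle A z

end MatrixNorms

lemma norm_le_iSup_norm_of_tendsto {E : Type*} [SeminormedAddCommGroup E] {u : ℕ → E} {a : E}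
    (h : Tendsto u atTop (𝓝 a)) : ‖a‖ ≤ ⨆ k, ‖u k‖ :=
  le_of_tendsto' h.norm fun k => le_ciSup h.norm.bddAbove_range k

section Kronecker

variable {n p : ℕ} (Rb : Matrix (Fin n) (Fin n) ℝ) (π : Fin n → ℝ)

lemma kronecker_one_mulVec_apply (A : Matrix (Fin n) (Fin n) ℝ) (z : Fin n × Fin p → ℝ)
    (i : Fin n) (j : Fin p) :
    (A ⊗ₖ (1 : Matrix (Fin p) (Fin p) ℝ) *ᵥ z) (i, j) = ∑ l, A i l * z (l, j) := by
  simp [Matrix.mulVec, dotProduct, Fintype.sum_prod_type, Matrix.one_apply]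

lemma VinfK_mulVec (z : Fin n × Fin p → ℝ) :
    VinfK n p π *ᵥ z = starVec n p (∑ l, π l • fun j => z (l, j)) := by
  ext ⟨i, j⟩
  simp [VinfK, starVec, kronecker_one_mulVec_apply, Finset.sum_apply]

lemma VinfK_mul_RK (hπstat : Matrix.vecMul π Rb = π) : VinfK n p π * RK n p Rb = VinfK n p π := by
  rw [VinfK, RK, ← Matrix.mul_kronecker_mul, Matrix.one_mul]
  congr 1
  ext i j
  simpa [Matrix.mul_apply, Matrix.vecMul, dotProduct] using congrFun hπstat j

lemma VK_mul_VinfK (hRb : Rb ∈ Matrix.rowStochastic ℝ (Fin n)) (m : ℕ) :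
    VK n p Rb m * VinfK n p π = VinfK n p π := by
  rw [VinfK, VK, ← Matrix.mul_kronecker_mul, Matrix.one_mul]
  congr 1
  ext i j
  simp [Matrix.mul_apply, ← Finset.sum_mul,
    Matrix.sum_row_of_mem_rowStochastic (pow_mem hRb m)]

lemma VinfK_mul_VinfK (hπsum : ∑ i, π i = 1) : VinfK n p π * VinfK n p π = VinfK n p π := by
  rw [VinfK, ← Matrix.mul_kronecker_mul, Matrix.one_mul]
  congr 1
  ext i j
  simp [Matrix.mul_apply, ← Finset.sum_mul, hπsum]

lemma VK_mul_RK (m : ℕ) : VK n p Rb m * RK n p Rb = VK n p Rb (m + 1) := by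
  rw [VK, RK, VK, ← Matrix.mul_kronecker_mul, Matrix.one_mul, pow_succ]

lemma RK_sub_VinfK_pow (hRb : Rb ∈ Matrix.rowStochastic ℝ (Fin n)) (hπsum : ∑ i, π i = 1)
    (hπstat : Matrix.vecMul π Rb = π) {m : ℕ} (hm : m ≠ 0) :
    (RK n p Rb - VinfK n p π) ^ m = VK n p Rb m - VinfK n p π := by
  induction m with
  | zero => exact absurd rfl hm
  | succ m ih =>
    rcases eq_or_ne m 0 with rfl | hm
    · rw [zero_add, pow_one, VK, pow_one, RK]
    rw [pow_succ, ih hm, sub_mul, mul_sub, mul_sub, VK_mul_RK, VK_mul_VinfK Rb π hRb,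
      VinfK_mul_RK Rb π hπstat, VinfK_mul_VinfK π hπsum]
    abel

lemma VinfK_mul_diagonal_inv (hπ : ∀ i, π i ≠ 0) :
    VinfK n p π * Matrix.diagonal (fun q : Fin n × Fin p => (π q.1)⁻¹)
      = (Matrix.of fun _ _ => 1 : Matrix (Fin n) (Fin n) ℝ) ⊗ₖ (1 : Matrix (Fin p) (Fin p) ℝ) := by
  ext ⟨i, j⟩ ⟨l, s⟩
  simp only [VinfK, Matrix.mul_diagonal, Matrix.kroneckerMap_apply, Matrix.of_apply]
  field_simp [hπ l]

lemma ones_kronecker_mulVec_gradf (g : Fin n → (Fin p → ℝ) → Fin p → ℝ)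
    (z : Fin n × Fin p → ℝ) :
    (Matrix.of fun _ _ => 1 : Matrix (Fin n) (Fin n) ℝ) ⊗ₖ (1 : Matrix (Fin p) (Fin p) ℝ)
        *ᵥ gradf g z
      = starVec n p (∑ l, g l fun j => z (l, j)) := by
  ext ⟨i, j⟩
  simp [starVec, gradf, kronecker_one_mulVec_apply, Finset.sum_apply]

end Kronecker

lemma abs_inv_sub_inv_le {a b c : ℝ} (hb : b ≠ 0) (ha : |a⁻¹| ≤ c) (hbc : |b⁻¹| ≤ c) :
    |a⁻¹ - b⁻¹| ≤ c ^ 2 * |a - b| := by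
  rcases eq_or_ne a 0 with rfl | ha0
  · have h1 : 1 ≤ c * |b| := by
      simpa [abs_inv, inv_mul_cancel₀ (abs_ne_zero.2 hb)] using
        mul_le_mul_of_nonneg_right hbc (abs_nonneg b)
    have hc : 0 ≤ c := (abs_nonneg _).trans hbc
    simp only [_root_.inv_zero, zero_sub, abs_neg]
    nlinarith [abs_nonneg b⁻¹]
  · rw [inv_sub_inv' ha0 hb, abs_mul, abs_mul, abs_sub_comm, sq]
    have := mul_le_mul ha hbc (abs_nonneg _) ((abs_nonneg _).trans ha)
    nlinarith [abs_nonneg (a - b), abs_nonneg a⁻¹, abs_nonneg b⁻¹]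

lemma abs_apply_le_l2_opNorm {ι : Type*} [Fintype ι] [DecidableEq ι] (A : Matrix ι ι ℝ)
    (a b : ι) : |A a b| ≤ ‖A‖ := by
  simpa [Matrix.mulVec_single_one, eucNorm_single] using
    (abs_apply_le_eucNorm (A *ᵥ Pi.single b 1) a).trans (eucNorm_mulVec_le A (Pi.single b 1))

lemma one_le_of_eucNorm_le_of_le_mul {ι : Type*} [Fintype ι] [Nonempty ι]
    {N : (ι → ℝ) → ℝ} {κ : ℝ} (hge : ∀ z, eucNorm z ≤ N z)
    (hle : ∀ z, N z ≤ κ * eucNorm z) : 1 ≤ κ := by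
  classical
  obtain ⟨i⟩ := ‹Nonempty ι›
  simpa [eucNorm_single] using (hge (Pi.single i 1)).trans (hle _)

section Contraction

variable {n p : ℕ} {Rb : Matrix (Fin n) (Fin n) ℝ} {π : Fin n → ℝ} {κ₃ σR : ℝ}

lemma l2_opNorm_VK_sub_VinfK_le {NR : (Fin n × Fin p → ℝ) → ℝ}
    (hRb : Rb ∈ Matrix.rowStochastic ℝ (Fin n)) (hπsum : ∑ i, π i = 1)
    (hπstat : Matrix.vecMul π Rb = π) (hNRge : ∀ z, eucNorm z ≤ NR z)
    (hκ₃R : ∀ z, NR z ≤ κ₃ * eucNorm z) (hκ₃ : 0 ≤ κ₃) {m : ℕ} (hm : m ≠ 0) :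
    ‖VK n p Rb m - VinfK n p π‖ ≤ κ₃ * opNorm NR (RK n p Rb - VinfK n p π) ^ m := by
  have hσ := opNorm_nonneg NR hNRge (RK n p Rb - VinfK n p π)
  refine l2_opNorm_le_of_eucNorm_mulVec_le (by positivity) fun z => ?_
  calc eucNorm ((VK n p Rb m - VinfK n p π) *ᵥ z)
      ≤ NR (((RK n p Rb - VinfK n p π) ^ m) *ᵥ z) := by
        rw [RK_sub_VinfK_pow Rb π hRb hπsum hπstat hm]; exact hNRge _
    _ ≤ opNorm NR (RK n p Rb - VinfK n p π) ^ m * (κ₃ * eucNorm z) :=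
        (le_opNorm_pow_mul hNRge hκ₃R _ m z).trans (by gcongr; exact hκ₃R z)
    _ = κ₃ * opNorm NR (RK n p Rb - VinfK n p π) ^ m * eucNorm z := by ring

lemma tendsto_VK (hcontr : ∀ m ≠ 0, ‖VK n p Rb m - VinfK n p π‖ ≤ κ₃ * σR ^ m)
    (hσR0 : 0 ≤ σR) (hσR1 : σR < 1) : Tendsto (VK n p Rb) atTop (𝓝 (VinfK n p π)) := by
  rw [tendsto_iff_norm_sub_tendsto_zero]
  refine squeeze_zero' (Eventually.of_forall fun _ => norm_nonneg _)
    ((eventually_ne_atTop 0).mono hcontr) ?_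
  simpa using (tendsto_pow_atTop_nhds_zero_of_lt_one hσR0 hσR1).const_mul κ₃

lemma eucNorm_VinfK_mulVec_le {v : ℝ}
    (hcontr : ∀ m ≠ 0, ‖VK n p Rb m - VinfK n p π‖ ≤ κ₃ * σR ^ m)
    (hσR0 : 0 ≤ σR) (hσR1 : σR < 1) (hv : v = ⨆ k, specNorm (VK n p Rb k))
    (z : Fin n × Fin p → ℝ) : eucNorm (VinfK n p π *ᵥ z) ≤ v * eucNorm z := by
  refine (eucNorm_mulVec_le _ z).trans (mul_le_mul_of_nonneg_right ?_ (eucNorm_nonneg z))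
  simp only [hv, specNorm_eq_l2_opNorm]
  exact norm_le_iSup_norm_of_tendsto (tendsto_VK hcontr hσR0 hσR1)

lemma abs_pow_apply_self_sub_le (hcontr : ∀ m ≠ 0, ‖VK n p Rb m - VinfK n p π‖ ≤ κ₃ * σR ^ m)
    (hκ₃ : 1 ≤ κ₃) (hπ : ∀ i, 0 < π i) (hπsum : ∑ i, π i = 1) (j : Fin p) (m : ℕ) (i : Fin n) :
    |(Rb ^ m) i i - π i| ≤ κ₃ * σR ^ m := by
  rcases eq_or_ne m 0 with rfl | hm
  · have : π i ≤ 1 := hπsum ▸ Finset.single_le_sum (fun l _ => (hπ l).le) (Finset.mem_univ i)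
    rw [pow_zero, pow_zero, Matrix.one_apply_eq, mul_one, abs_of_nonneg (by linarith)]
    linarith [hπ i]
  · simpa [VK, VinfK] using
      (abs_apply_le_l2_opNorm (VK n p Rb m - VinfK n p π) (i, j) (i, j)).trans (hcontr m hm)

lemma tendsto_pow_apply_self (habs : ∀ m i, |(Rb ^ m) i i - π i| ≤ κ₃ * σR ^ m)
    (hσR0 : 0 ≤ σR) (hσR1 : σR < 1) (i : Fin n) :
    Tendsto (fun m => (Rb ^ m) i i) atTop (𝓝 (π i)) := by
  have h := (tendsto_pow_atTop_nhds_zero_of_lt_one hσR0 hσR1).const_mul κ₃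
  rw [mul_zero] at h
  exact tendsto_iff_norm_sub_tendsto_zero.2 (squeeze_zero (fun _ => norm_nonneg _) (habs · i) h)

lemma tendsto_diag_inv (habs : ∀ m i, |(Rb ^ m) i i - π i| ≤ κ₃ * σR ^ m)
    (hσR0 : 0 ≤ σR) (hσR1 : σR < 1) (hπ : ∀ i, π i ≠ 0) :
    Tendsto (fun m (q : Fin n × Fin p) => ((Rb ^ m) q.1 q.1)⁻¹) atTop (𝓝 fun q => (π q.1)⁻¹) :=
  tendsto_pi_nhds.2 fun q => (tendsto_pow_apply_self habs hσR0 hσR1 q.1).inv₀ (hπ q.1)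

lemma specNorm_VtinvK (m : ℕ) :
    specNorm (VtinvK n p Rb m) = ‖fun q : Fin n × Fin p => ((Rb ^ m) q.1 q.1)⁻¹‖ := by
  rw [specNorm_eq_l2_opNorm, VtinvK, Matrix.l2_opNorm_diagonal]

variable {vt : ℝ}

lemma norm_diag_inv_le
    (hu : Tendsto (fun m (q : Fin n × Fin p) => ((Rb ^ m) q.1 q.1)⁻¹) atTop
      (𝓝 fun q => (π q.1)⁻¹))
    (hvt : vt = ⨆ k, specNorm (VtinvK n p Rb k)) (m : ℕ) :
    ‖fun q : Fin n × Fin p => ((Rb ^ m) q.1 q.1)⁻¹‖ ≤ vt := by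
  simp only [hvt, specNorm_VtinvK]
  exact le_ciSup hu.norm.bddAbove_range m

lemma norm_inv_stationary_le
    (hu : Tendsto (fun m (q : Fin n × Fin p) => ((Rb ^ m) q.1 q.1)⁻¹) atTop
      (𝓝 fun q => (π q.1)⁻¹))
    (hvt : vt = ⨆ k, specNorm (VtinvK n p Rb k)) :
    ‖fun q : Fin n × Fin p => (π q.1)⁻¹‖ ≤ vt := by
  simp only [hvt, specNorm_VtinvK]
  exact norm_le_iSup_norm_of_tendsto hu

lemma eucNorm_VtinvK_mulVec_le
    (hu : Tendsto (fun m (q : Fin n × Fin p) => ((Rb ^ m) q.1 q.1)⁻¹) atTop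
      (𝓝 fun q => (π q.1)⁻¹))
    (hvt : vt = ⨆ k, specNorm (VtinvK n p Rb k)) (m : ℕ) (z : Fin n × Fin p → ℝ) :
    eucNorm (VtinvK n p Rb m *ᵥ z) ≤ vt * eucNorm z := by
  refine (eucNorm_mulVec_le _ z).trans (mul_le_mul_of_nonneg_right ?_ (eucNorm_nonneg z))
  rw [← specNorm_eq_l2_opNorm, specNorm_VtinvK]
  exact norm_diag_inv_le hu hvt m

lemma eucNorm_VtinvK_sub_mulVec_le
    (hu : Tendsto (fun m (q : Fin n × Fin p) => ((Rb ^ m) q.1 q.1)⁻¹) atTop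
      (𝓝 fun q => (π q.1)⁻¹))
    (hvt : vt = ⨆ k, specNorm (VtinvK n p Rb k)) (hπ : ∀ i, π i ≠ 0) {m : ℕ} {c : ℝ}
    (hc : 0 ≤ c) (habs : ∀ i, |(Rb ^ m) i i - π i| ≤ c) (z : Fin n × Fin p → ℝ) :
    eucNorm ((VtinvK n p Rb m - Matrix.diagonal fun q : Fin n × Fin p => (π q.1)⁻¹) *ᵥ z)
      ≤ vt ^ 2 * c * eucNorm z := by
  refine (eucNorm_mulVec_le _ z).trans (mul_le_mul_of_nonneg_right ?_ (eucNorm_nonneg z))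
  rw [VtinvK, Matrix.diagonal_sub, Matrix.l2_opNorm_diagonal,
    pi_norm_le_iff_of_nonneg (by positivity)]
  intro q
  exact (abs_inv_sub_inv_le (hπ q.1) ((norm_le_pi_norm _ q).trans (norm_diag_inv_le hu hvt m))
    ((norm_le_pi_norm _ q).trans (norm_inv_stationary_le hu hvt))).trans
    (mul_le_mul_of_nonneg_left (habs q.1) (sq_nonneg vt))

end Contraction

section Dynamics

variable {ι : Type*} [Fintype ι] [DecidableEq ι] {R V : Matrix ι ι ℝ} {D : ℕ → Matrix ι ι ℝ}
  {G : (ι → ℝ) → ι → ℝ} {α β : ℝ} {x y : ℕ → ι → ℝ}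

lemma mulVec_dual_eq_zero (hVR : V * R = V) (hy0 : y 0 = 0)
    (hyrec : ∀ k, y (k + 1) = y k + β • ((1 - R) *ᵥ x (k + 1))) (k : ℕ) : V *ᵥ y k = 0 := by
  induction k with
  | zero => rw [hy0, Matrix.mulVec_zero]
  | succ k ih =>
    rw [hyrec, Matrix.mulVec_add, ih, Matrix.mulVec_smul, Matrix.mulVec_mulVec, Matrix.mul_sub,
      Matrix.mul_one, hVR, sub_self, Matrix.zero_mulVec, smul_zero, add_zero]

lemma mulVec_primal_succ_sub (hVR : V * R = V) (hy0 : y 0 = 0)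
    (hyrec : ∀ k, y (k + 1) = y k + β • ((1 - R) *ᵥ x (k + 1)))
    (hxrec : ∀ k, x (k + 1) = R *ᵥ x k - α • (y k + D k *ᵥ G (x k))) (k : ℕ) :
    V *ᵥ x (k + 1) - V *ᵥ x k = -(α • V *ᵥ (D k *ᵥ G (x k))) := by
  rw [hxrec, Matrix.mulVec_sub, Matrix.mulVec_mulVec, hVR, Matrix.mulVec_smul, Matrix.mulVec_add,
    mulVec_dual_eq_zero hVR hy0 hyrec, zero_add]
  abel

end Dynamics

section Gradients

variable {n p : ℕ} {g : Fin n → (Fin p → ℝ) → Fin p → ℝ} {L : ℝ}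

lemma sum_eq_zero_of_isGradient_of_isMin {κ : Type*} [Fintype κ] {f : κ → (Fin p → ℝ) → ℝ}
    {g : κ → (Fin p → ℝ) → Fin p → ℝ} (hgrad : ∀ i, IsGradient (f i) (g i)) {xstar : Fin p → ℝ}
    (hmin : ∀ w, ∑ i, f i xstar ≤ ∑ i, f i w) : ∑ i, g i xstar = 0 := by
  have hderiv := IsLocalMin.hasFDerivAt_eq_zero (Eventually.of_forall hmin)
    (HasFDerivAt.fun_sum fun i _ => hgrad i xstar)
  ext j
  simpa [Pi.single_apply] using DFunLike.congr_fun hderiv (Pi.single j 1)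

lemma sum_sq_eucNorm_blocks (z : Fin n × Fin p → ℝ) :
    ∑ i, eucNorm (fun j => z (i, j)) ^ 2 = eucNorm z ^ 2 := by
  simp only [sq_eucNorm, Fintype.sum_prod_type]

lemma sum_eucNorm_blocks_le (z : Fin n × Fin p → ℝ) :
    ∑ i, eucNorm (fun j => z (i, j)) ≤ √n * eucNorm z := by
  refine (pow_le_pow_iff_left₀ (sum_nonneg fun _ _ => eucNorm_nonneg _)
    (mul_nonneg (Real.sqrt_nonneg _) (eucNorm_nonneg _)) two_ne_zero).1 ?_
  simpa [mul_pow, ← sum_sq_eucNorm_blocks z] using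
    sq_sum_le_card_mul_sum_sq (s := univ) (f := fun i => eucNorm fun j => z (i, j))

lemma starVec_sub (a b : Fin p → ℝ) : starVec n p a - starVec n p b = starVec n p (a - b) := rfl

lemma eucNorm_starVec (w : Fin p → ℝ) : eucNorm (starVec n p w) = √n * eucNorm w := by
  simp [eucNorm, starVec, Fintype.sum_prod_type, Real.sqrt_mul]

lemma eucNorm_gradf_sub_le (hL : 0 ≤ L)
    (hLip : ∀ i x x', eucNorm (g i x - g i x') ≤ L * eucNorm (x - x'))
    (z w : Fin n × Fin p → ℝ) : eucNorm (gradf g z - gradf g w) ≤ L * eucNorm (z - w) := by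
  refine (pow_le_pow_iff_left₀ (eucNorm_nonneg _) (mul_nonneg hL (eucNorm_nonneg _))
    two_ne_zero).1 ?_
  rw [← sum_sq_eucNorm_blocks (gradf g z - gradf g w), mul_pow, ← sum_sq_eucNorm_blocks (z - w),
    mul_sum]
  refine sum_le_sum fun i _ => ?_
  rw [← mul_pow]
  exact pow_le_pow_left₀ (eucNorm_nonneg _) (hLip i (fun j => z (i, j)) (fun j => w (i, j))) 2

lemma eucNorm_sum_gradient_blocks_le (hL : 0 ≤ L)
    (hLip : ∀ i x x', eucNorm (g i x - g i x') ≤ L * eucNorm (x - x'))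
    {xstar : Fin p → ℝ} (hstar : ∑ i, g i xstar = 0) (z : Fin n × Fin p → ℝ) (w : Fin p → ℝ) :
    eucNorm (∑ i, g i fun j => z (i, j))
      ≤ L * √n * eucNorm (z - starVec n p w) + n * L * eucNorm (w - xstar) := by
  have hsplit : ∑ i, g i (fun j => z (i, j))
      = ∑ i, (g i (fun j => z (i, j)) - g i w) + ∑ i, (g i w - g i xstar) := by
    rw [← sum_add_distrib, ← sub_zero (∑ i, g i fun j => z (i, j)), ← hstar, ← sum_sub_distrib]
    simp
  calc eucNorm (∑ i, g i fun j => z (i, j))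
      ≤ ∑ i, eucNorm (g i (fun j => z (i, j)) - g i w) + ∑ i, eucNorm (g i w - g i xstar) := by
        rw [hsplit]
        exact (eucNorm_add_le _ _).trans (add_le_add (eucNorm_sum_le _ _) (eucNorm_sum_le _ _))
    _ ≤ ∑ i, L * eucNorm (fun j => (z - starVec n p w) (i, j))
          + ∑ i : Fin n, L * eucNorm (w - xstar) :=
        add_le_add (sum_le_sum fun i _ => hLip i _ _) (sum_le_sum fun i _ => hLip i _ _)
    _ ≤ L * √n * eucNorm (z - starVec n p w) + n * L * eucNorm (w - xstar) := by
        rw [← mul_sum, sum_const, card_univ, Fintype.card_fin, nsmul_eq_mul, mul_assoc L,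
          ← mul_assoc]
        gcongr
        exact sum_eucNorm_blocks_le _

lemma eucNorm_ones_kronecker_mulVec_gradf_le {π : Fin n → ℝ} (hL : 0 ≤ L)
    (hLip : ∀ i x x', eucNorm (g i x - g i x') ≤ L * eucNorm (x - x'))
    {xstar : Fin p → ℝ} (hstar : ∑ i, g i xstar = 0) (z : Fin n × Fin p → ℝ) :
    eucNorm ((Matrix.of fun _ _ => 1 : Matrix (Fin n) (Fin n) ℝ) ⊗ₖ (1 : Matrix (Fin p) (Fin p) ℝ)
        *ᵥ gradf g z)
      ≤ n * L * eucNorm (z - VinfK n p π *ᵥ z)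
        + n * L * eucNorm (VinfK n p π *ᵥ z - starVec n p xstar) := by
  rw [ones_kronecker_mulVec_gradf, eucNorm_starVec, VinfK_mulVec, starVec_sub, eucNorm_starVec]
  set w := ∑ l, π l • fun j => z (l, j)
  have hsqrt : √(n : ℝ) * √n = n := Real.mul_self_sqrt n.cast_nonneg
  calc √n * eucNorm (∑ i, g i fun j => z (i, j))
      ≤ √n * (L * √n * eucNorm (z - starVec n p w) + n * L * eucNorm (w - xstar)) := by
        gcongr
        exact eucNorm_sum_gradient_blocks_le hL hLip hstar z w
    _ = n * L * eucNorm (z - starVec n p w) + n * L * (√n * eucNorm (w - xstar)) := by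
        linear_combination (L * eucNorm (z - starVec n p w)) * hsqrt

lemma eucNorm_VinfK_mulVec_VtinvK_mulVec_gradf_le {Rb : Matrix (Fin n) (Fin n) ℝ}
    {π : Fin n → ℝ} {m : ℕ} {v vt c : ℝ} (hπ : ∀ i, π i ≠ 0)
    (hV : ∀ z, eucNorm (VinfK n p π *ᵥ z) ≤ v * eucNorm z) (hv : 0 ≤ v)
    (hVt : ∀ z, eucNorm (VtinvK n p Rb m *ᵥ z) ≤ vt * eucNorm z) (hvt : 0 ≤ vt)
    (hVtD : ∀ z, eucNorm ((VtinvK n p Rb m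
      - Matrix.diagonal fun q : Fin n × Fin p => (π q.1)⁻¹) *ᵥ z) ≤ c * eucNorm z)
    (hL : 0 ≤ L) (hLip : ∀ i x x', eucNorm (g i x - g i x') ≤ L * eucNorm (x - x'))
    {xstar : Fin p → ℝ} (hstar : ∑ i, g i xstar = 0) (z₀ z₁ : Fin n × Fin p → ℝ) :
    eucNorm (VinfK n p π *ᵥ (VtinvK n p Rb m *ᵥ gradf g z₀))
      ≤ v * vt * L * eucNorm (z₁ - z₀) + v * c * eucNorm (gradf g z₁)
        + (n * L * eucNorm (z₁ - VinfK n p π *ᵥ z₁)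
          + n * L * eucNorm (VinfK n p π *ᵥ z₁ - starVec n p xstar)) := by
  have hsplit : VinfK n p π *ᵥ (VtinvK n p Rb m *ᵥ gradf g z₀)
      = VinfK n p π *ᵥ (VtinvK n p Rb m *ᵥ (gradf g z₀ - gradf g z₁))
        + VinfK n p π *ᵥ ((VtinvK n p Rb m
            - Matrix.diagonal fun q : Fin n × Fin p => (π q.1)⁻¹) *ᵥ gradf g z₁)
        + (Matrix.of fun _ _ => 1 : Matrix (Fin n) (Fin n) ℝ) ⊗ₖ (1 : Matrix (Fin p) (Fin p) ℝ)
            *ᵥ gradf g z₁ := by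
    rw [← VinfK_mul_diagonal_inv π hπ, ← Matrix.mulVec_mulVec, Matrix.mulVec_sub,
      Matrix.sub_mulVec, Matrix.mulVec_sub, Matrix.mulVec_sub]
    abel
  rw [hsplit]
  refine (eucNorm_add_le _ _).trans (add_le_add ((eucNorm_add_le _ _).trans (add_le_add ?_ ?_))
    (eucNorm_ones_kronecker_mulVec_gradf_le hL hLip hstar z₁))
  · calc _ ≤ v * (vt * (L * eucNorm (z₀ - z₁))) :=
          (hV _).trans <| by
            gcongr
            exact (hVt _).trans (by gcongr; exact eucNorm_gradf_sub_le hL hLip z₀ z₁)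
      _ = v * vt * L * eucNorm (z₁ - z₀) := by rw [eucNorm_sub_comm]; ring
  · exact (hV _).trans ((mul_le_mul_of_nonneg_left (hVtD _) hv).trans_eq (mul_assoc _ _ _).symm)

end Gradients

end Frsd

open Frsd

theorem stmt11_general (n p : ℕ) (hn : 1 ≤ n) (hp : 1 ≤ p) (Rb : Matrix (Fin n) (Fin n) ℝ)
    (hnonneg : ∀ i j, 0 ≤ Rb i j) (hrow : ∀ i, ∑ j, Rb i j = 1)
    (π : Fin n → ℝ) (hπpos : ∀ i, 0 < π i) (hπsum : ∑ i, π i = 1)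
    (hπstat : Matrix.vecMul π Rb = π)
    (f : Fin n → (Fin p → ℝ) → ℝ) (g : Fin n → (Fin p → ℝ) → Fin p → ℝ)
    (μ L : ℝ) (hμ : 0 < μ) (hμL : μ ≤ L)
    (hgrad : ∀ i, IsGradient (f i) (g i))
    (hLip : ∀ i x x', eucNorm (g i x - g i x') ≤ L * eucNorm (x - x'))
    (xstar : Fin p → ℝ)
    (hmin : ∀ w, ∑ i, f i xstar ≤ ∑ i, f i w)
    (NR NC : (Fin n × Fin p → ℝ) → ℝ)
    (hNRge : ∀ z, eucNorm z ≤ NR z) (hNCge : ∀ z, eucNorm z ≤ NC z)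
    (κ₃ : ℝ)
    (hκ₃R : ∀ z, NR z ≤ κ₃ * eucNorm z)
    (v vt : ℝ) (hv : v = ⨆ k : ℕ, specNorm (VK n p Rb k))
    (hvt : vt = ⨆ k : ℕ, specNorm (VtinvK n p Rb k))
    (σR : ℝ) (hσRdef : σR = opNorm NR (RK n p Rb - VinfK n p π))
    (hσR0 : 0 < σR) (hσR1 : σR < 1)
    (α β : ℝ) (hα0 : 0 < α)
    (x y : ℕ → (Fin n × Fin p → ℝ)) (hy0 : y 0 = 0)
    (hxrec : ∀ k, x (k + 1) =
      (RK n p Rb).mulVec (x k) - α • (y k + (VtinvK n p Rb k).mulVec (gradf g (x k))))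
    (hyrec : ∀ k, y (k + 1) = y k + β • ((1 - RK n p Rb).mulVec (x (k + 1))))
    :
    ∀ k : ℕ, 1 ≤ k →
      eucNorm ((VinfK n p π).mulVec (x k) - (VinfK n p π).mulVec (x (k - 1))) ≤
        α * v * vt * L * NR (x k - x (k - 1))
          + 3 * α * v * vt ^ 2 * Real.sqrt n * κ₃ * σR ^ (k - 1) * eucNorm (gradf g (x k))
          + α * n * L * NC (x k - (VinfK n p π).mulVec (x k))
          + α * n * L * eucNorm ((VinfK n p π).mulVec (x k) - starVec n p xstar) := by
  have hL : 0 ≤ L := hμ.le.trans hμL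
  have hRb : Rb ∈ Matrix.rowStochastic ℝ (Fin n) :=
    Matrix.mem_rowStochastic_iff_sum.2 ⟨hnonneg, hrow⟩
  have : Nonempty (Fin n × Fin p) := ⟨(⟨0, hn⟩, ⟨0, hp⟩)⟩
  have hκ₃ : 1 ≤ κ₃ := one_le_of_eucNorm_le_of_le_mul hNRge hκ₃R
  have hπ : ∀ i, π i ≠ 0 := fun i => (hπpos i).ne'
  have hcontr : ∀ m ≠ 0, ‖VK n p Rb m - VinfK n p π‖ ≤ κ₃ * σR ^ m := fun m hm =>
    hσRdef ▸ l2_opNorm_VK_sub_VinfK_le hRb hπsum hπstat hNRge hκ₃R (by linarith) hm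
  have habs := abs_pow_apply_self_sub_le hcontr hκ₃ hπpos hπsum ⟨0, hp⟩
  have hu := tendsto_diag_inv (p := p) habs hσR0.le hσR1 hπ
  have hv0 : 0 ≤ v := hv ▸ Real.iSup_nonneg fun _ => specNorm_nonneg _
  have hvt0 : 0 ≤ vt := hvt ▸ Real.iSup_nonneg fun _ => specNorm_nonneg _
  rintro k hk
  obtain ⟨m, rfl⟩ := Nat.exists_eq_add_of_le' hk
  have hest := eucNorm_VinfK_mulVec_VtinvK_mulVec_gradf_le hπ
    (eucNorm_VinfK_mulVec_le hcontr hσR0.le hσR1 hv) hv0 (eucNorm_VtinvK_mulVec_le hu hvt m) hvt0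
    (eucNorm_VtinvK_sub_mulVec_le hu hvt hπ (by positivity) (habs m))
    hL hLip (sum_eq_zero_of_isGradient_of_isMin hgrad hmin) (x m) (x (m + 1))
  have h3 : 1 ≤ 3 * √(n : ℝ) := by
    nlinarith [Real.one_le_sqrt.2 (Nat.one_le_cast.2 hn : (1 : ℝ) ≤ n)]
  rw [Nat.add_sub_cancel, mulVec_primal_succ_sub (VinfK_mul_RK Rb π hπstat) hy0 hyrec hxrec,
    eucNorm_neg, eucNorm_smul, abs_of_pos hα0]
  calc α * eucNorm (VinfK n p π *ᵥ (VtinvK n p Rb m *ᵥ gradf g (x m)))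
      ≤ α * (v * vt * L * NR (x (m + 1) - x m)
          + 3 * √n * (v * (vt ^ 2 * (κ₃ * σR ^ m)) * eucNorm (gradf g (x (m + 1))))
          + (n * L * NC (x (m + 1) - VinfK n p π *ᵥ x (m + 1))
            + n * L * eucNorm (VinfK n p π *ᵥ x (m + 1) - starVec n p xstar))) := by
        refine mul_le_mul_of_nonneg_left (hest.trans ?_) hα0.le
        refine add_le_add (add_le_add ?_ ?_) (add_le_add ?_ le_rfl)
        · exact mul_le_mul_of_nonneg_left (hNRge _) (by positivity)
        · exact le_mul_of_one_le_left
            (mul_nonneg (by positivity) (eucNorm_nonneg _)) h3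
        · exact mul_le_mul_of_nonneg_left (hNCge _) (by positivity)
    _ = _ := by ring

/-- Lemma 4(c): for `k ≥ 1`,
`‖x̂(k) − x̂(k−1)‖ ≤ α v ṽ L ‖x(k)−x(k−1)‖_R + 3 α v ṽ² √n κ₃ σ_R^{k−1} ‖∇f(x(k))‖
  + α nL ‖x(k)−x̂(k)‖_C + α nL ‖x̂(k)−x*_vec‖`. -/
theorem stmt11 (n p : ℕ) (hn : 1 ≤ n) (hp : 1 ≤ p) (Rb : Matrix (Fin n) (Fin n) ℝ)
    (hnonneg : ∀ i j, 0 ≤ Rb i j) (hrow : ∀ i, ∑ j, Rb i j = 1)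
    (hdiag : ∀ i, 0 < Rb i i)
    (hirr : ∀ i j, ∃ k : ℕ, 0 < (Rb ^ k) i j)
    (π : Fin n → ℝ) (hπpos : ∀ i, 0 < π i) (hπsum : ∑ i, π i = 1)
    (hπstat : Matrix.vecMul π Rb = π)
    (f : Fin n → (Fin p → ℝ) → ℝ) (g : Fin n → (Fin p → ℝ) → Fin p → ℝ)
    (μ L : ℝ) (hμ : 0 < μ) (hμL : μ ≤ L)
    (hgrad : ∀ i, IsGradient (f i) (g i))
    (hLip : ∀ i x x', eucNorm (g i x - g i x') ≤ L * eucNorm (x - x'))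
    (hsc : ∀ i x x',
      f i x + (∑ j, g i x j * (x' j - x j)) + μ / 2 * eucNorm (x' - x) ^ 2 ≤ f i x')
    (xstar : Fin p → ℝ)
    (hmin : ∀ w, ∑ i, f i xstar ≤ ∑ i, f i w)
    (huniq : ∀ w, (∀ w', ∑ i, f i w ≤ ∑ i, f i w') → w = xstar)
    (NR NC : (Fin n × Fin p → ℝ) → ℝ)
    (hNRtri : ∀ z w, NR (z + w) ≤ NR z + NR w)
    (hNRhom : ∀ (a : ℝ) z, NR (a • z) = |a| * NR z)
    (hNRdef : ∀ z, NR z = 0 ↔ z = 0)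
    (hNCtri : ∀ z w, NC (z + w) ≤ NC z + NC w)
    (hNChom : ∀ (a : ℝ) z, NC (a • z) = |a| * NC z)
    (hNCdef : ∀ z, NC z = 0 ↔ z = 0)
    (hNRge : ∀ z, eucNorm z ≤ NR z) (hNCge : ∀ z, eucNorm z ≤ NC z)
    (κ₁ κ₂ κ₃ κ₄ : ℝ) (hκ₁ : 0 < κ₁) (hκ₂ : 0 < κ₂) (hκ₃ : 0 < κ₃) (hκ₄ : 0 < κ₄)
    (hκ₁R : ∀ z, NR z ≤ κ₁ * NC z) (hκ₂C : ∀ z, NC z ≤ κ₂ * NR z)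
    (hκ₃R : ∀ z, NR z ≤ κ₃ * eucNorm z) (hκ₄C : ∀ z, NC z ≤ κ₄ * eucNorm z)
    (v vt : ℝ) (hv : v = ⨆ k : ℕ, specNorm (VK n p Rb k))
    (hvt : vt = ⨆ k : ℕ, specNorm (VtinvK n p Rb k))
    (σR : ℝ) (hσRdef : σR = opNorm NR (RK n p Rb - VinfK n p π))
    (hσR0 : 0 < σR) (hσR1 : σR < 1)
    (α β : ℝ) (hα0 : 0 < α) (hβ0 : 0 < β) (hαβ : α * β < 1)
    (x y : ℕ → (Fin n × Fin p → ℝ)) (hy0 : y 0 = 0)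
    (hxrec : ∀ k, x (k + 1) =
      (RK n p Rb).mulVec (x k) - α • (y k + (VtinvK n p Rb k).mulVec (gradf g (x k))))
    (hyrec : ∀ k, y (k + 1) = y k + β • ((1 - RK n p Rb).mulVec (x (k + 1))))
    :
    ∀ k : ℕ, 1 ≤ k →
      eucNorm ((VinfK n p π).mulVec (x k) - (VinfK n p π).mulVec (x (k - 1))) ≤
        α * v * vt * L * NR (x k - x (k - 1))
          + 3 * α * v * vt ^ 2 * Real.sqrt n * κ₃ * σR ^ (k - 1) * eucNorm (gradf g (x k))
          + α * n * L * NC (x k - (VinfK n p π).mulVec (x k))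
          + α * n * L * eucNorm ((VinfK n p π).mulVec (x k) - starVec n p xstar) :=
  stmt11_general n p hn hp Rb hnonneg hrow π hπpos hπsum hπstat f g μ L hμ hμL hgrad hLip xstar hmin
    NR NC hNRge hNCge κ₃ hκ₃R v vt hv hvt σR hσRdef hσR0 hσR1 α β hα0 x y hy0 hxrec hyrec
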